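/- Let H₀ be a self-adjoint operator on 𝓗, C ∈ B(𝓗), and suppose sup_{z∈ℂ∖ℝ} ‖C(H₀−z)⁻¹C‖ < ∞. Then H₀ restricted to the closure of the range of C has no eigenvalues; in particular, if C is injective with dense range, σ_pp(H₀) = ∅. -/
import Mathlib


open MeasureTheory Filter Complex
open scoped InnerProductSpace Topology

/-- Let `H₀` be self-adjoint with resolvents `R z = (H₀ - z)⁻¹` for
`Im z ≠ 0`, and let `C` be bounded with `sup_{z∉ℝ} ‖C R z C‖ < ∞`. Then `H₀` has no
eigenvector in the closure of the range of `C`; in particular, if `C` is injective with dense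
range, `H₀` has no eigenvalues at all (`σ_pp(H₀) = ∅`). -/
theorem stmt_15 {𝓗 : Type*} [NormedAddCommGroup 𝓗] [InnerProductSpace ℂ 𝓗] [CompleteSpace 𝓗]
    (H₀ : 𝓗 →ₗ.[ℂ] 𝓗) (hH₀ : IsSelfAdjoint H₀)
    (R : ℂ → (𝓗 →L[ℂ] 𝓗))
    -- R z is the resolvent (H₀ - z)⁻¹ for Im z ≠ 0
    (hres : ∀ z : ℂ, z.im ≠ 0 →
      (∀ u : 𝓗, ∃ h : R z u ∈ H₀.domain, H₀ ⟨R z u, h⟩ - z • R z u = u) ∧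
      (∀ u : H₀.domain, R z (H₀ u - z • (u : 𝓗)) = (u : 𝓗)))
    (C : 𝓗 →L[ℂ] 𝓗) (hC : IsSelfAdjoint C)
    -- the uniform limiting absorption principle
    (hLAP : ∃ K : ℝ, ∀ z : ℂ, z.im ≠ 0 → ‖C.comp ((R z).comp C)‖ ≤ K) :
    (∀ (lam : ℂ) (u : H₀.domain), H₀ u = lam • (u : 𝓗) →
      (u : 𝓗) ∈ closure (Set.range (⇑C)) → (u : 𝓗) = 0) ∧
    (Function.Injective (⇑C) → DenseRange (⇑C) →
      ∀ (lam : ℂ) (u : H₀.domain), H₀ u = lam • (u : 𝓗) → (u : 𝓗) = 0) := by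
  obtain ⟨K, hK⟩ := hLAP
  have hK0 : 0 ≤ K := le_trans (norm_nonneg _) (hK Complex.I (by simp))
  have hdense : Dense (H₀.domain : Set 𝓗) := hH₀.dense_domain
  -- symmetry of H₀
  have hsym : ∀ x y : H₀.domain, ⟪H₀ x, (y : 𝓗)⟫_ℂ = ⟪(x : 𝓗), H₀ y⟫_ℂ := by
    have h := LinearPMap.adjoint_isFormalAdjoint hdense
    rwa [show H₀.adjoint = H₀ from hH₀] at h
  -- resolvent bound ‖R z f‖ ≤ ‖f‖ / |Im z|
  have hRb : ∀ z : ℂ, z.im ≠ 0 → ∀ f : 𝓗, |z.im| * ‖R z f‖ ≤ ‖f‖ := by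
    intro z hz f
    obtain ⟨hm, heq⟩ := (hres z hz).1 f
    set w := R z f with hw
    have hrealc : (starRingEnd ℂ) ⟪(w : 𝓗), H₀ ⟨w, hm⟩⟫_ℂ = ⟪(w : 𝓗), H₀ ⟨w, hm⟩⟫_ℂ := by
      rw [inner_conj_symm]
      exact hsym ⟨w, hm⟩ ⟨w, hm⟩
    have hreal : (⟪(w : 𝓗), H₀ ⟨w, hm⟩⟫_ℂ).im = 0 := Complex.conj_eq_iff_im.mp hrealc
    have hinner : ⟪(w : 𝓗), f⟫_ℂ = ⟪(w : 𝓗), H₀ ⟨w, hm⟩⟫_ℂ - z * ⟪(w : 𝓗), (w : 𝓗)⟫_ℂ := by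
      rw [← heq, inner_sub_right, inner_smul_right]
    have him : (⟪(w : 𝓗), f⟫_ℂ).im = -(z.im * ‖w‖ ^ 2) := by
      have hs1 : (⟪w, w⟫_ℂ).im = 0 := inner_self_im (𝕜 := ℂ) w
      have hs2 : (⟪w, w⟫_ℂ).re = ‖w‖ ^ 2 := inner_self_eq_norm_sq (𝕜 := ℂ) w
      rw [hinner]
      simp only [Complex.sub_im, Complex.mul_im, hreal, hs1, hs2]
      ring
    have h1 : |z.im| * ‖w‖ ^ 2 ≤ ‖w‖ * ‖f‖ := by
      have h2 : |(⟪(w : 𝓗), f⟫_ℂ).im| ≤ ‖⟪(w : 𝓗), f⟫_ℂ‖ := Complex.abs_im_le_norm _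
      rw [him, abs_neg, abs_mul, _root_.abs_of_nonneg (by positivity : (0:ℝ) ≤ ‖w‖ ^ 2)] at h2
      exact h2.trans (norm_inner_le_norm _ _)
    rcases eq_or_lt_of_le (norm_nonneg w) with h | h
    · rw [← h, mul_zero]; exact norm_nonneg f
    · nlinarith [h1]
  -- main claim
  have main : ∀ (lam : ℂ) (u : H₀.domain), H₀ u = lam • (u : 𝓗) →
      (u : 𝓗) ∈ closure (Set.range (⇑C)) → (u : 𝓗) = 0 := by
    intro lam u hu hucl
    by_cases hlam : lam.im ≠ 0
    · have h2 := (hres lam hlam).2 u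
      rw [hu, sub_self, map_zero] at h2
      exact h2.symm
    · push_neg at hlam
      -- Step 1 : C u = 0
      have hCu : C u = 0 := by
        rw [← norm_le_zero_iff]
        refine le_of_forall_pos_le_add ?_
        intro η hη
        rw [zero_add]
        -- choose v with ‖C v - u‖ small
        have hδ : (0:ℝ) < η / (2 * (‖C‖ + 1)) := by positivity
        obtain ⟨_, ⟨v, rfl⟩, hv⟩ := Metric.mem_closure_iff.mp hucl _ hδ
        rw [dist_comm, dist_eq_norm] at hv
        -- choose ε small
        set ε : ℝ := η / (2 * (K * ‖v‖ + 1)) with hε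
        have hεpos : (0:ℝ) < ε := by positivity
        set z : ℂ := lam + (ε : ℂ) * Complex.I with hz
        have hzim : z.im = ε := by simp [hz, hlam]
        have hzim' : z.im ≠ 0 := by rw [hzim]; exact ne_of_gt hεpos
        have hlamz : lam - z = -((ε : ℂ) * Complex.I) := by ring
        have hlamz0 : lam - z ≠ 0 := by
          rw [hlamz]
          simp [Complex.ext_iff, ne_of_gt hεpos]
        have hlamznorm : ‖lam - z‖ = ε := by
          rw [hlamz]
          simp [abs_of_pos hεpos]
        -- compute R z u
        have hRu : (lam - z) • R z (u : 𝓗) = (u : 𝓗) := by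
          have h2 := (hres z hzim').2 u
          rw [hu, ← sub_smul, _root_.map_smul] at h2
          exact h2
        have hRu' : R z (u : 𝓗) = (lam - z)⁻¹ • (u : 𝓗) := by
          have h3 : (lam - z)⁻¹ • ((lam - z) • R z (u : 𝓗)) = (lam - z)⁻¹ • (u : 𝓗) := by
            rw [hRu]
          rwa [smul_smul, inv_mul_cancel₀ hlamz0, one_smul] at h3
        -- the key estimate
        have hCRu : ‖C (R z (u : 𝓗))‖ = ε⁻¹ * ‖C (u : 𝓗)‖ := by
          rw [hRu', _root_.map_smul, norm_smul, norm_inv, hlamznorm]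
        have hsplit : C (R z (C v)) - C (R z (C v - (u : 𝓗))) = C (R z (u : 𝓗)) := by
          rw [← _root_.map_sub C, ← _root_.map_sub (R z), sub_sub_cancel]
        have hb1 : ‖C (R z (C v))‖ ≤ K * ‖v‖ := by
          have h := le_trans ((C.comp ((R z).comp C)).le_opNorm v)
            (mul_le_mul_of_nonneg_right (hK z hzim') (norm_nonneg v))
          simpa using h
        have hb2 : ‖C (R z (C v - (u : 𝓗)))‖ ≤ ‖C‖ * (ε⁻¹ * ‖C v - (u : 𝓗)‖) := by
          refine le_trans (C.le_opNorm _) (mul_le_mul_of_nonneg_left ?_ (norm_nonneg C))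
          have := hRb z hzim' (C v - (u : 𝓗))
          rw [hzim, abs_of_pos hεpos] at this
          rw [← le_div_iff₀' hεpos] at this
          rw [inv_mul_eq_div]
          exact this
        have hkey : ε⁻¹ * ‖C (u : 𝓗)‖ ≤ K * ‖v‖ + ‖C‖ * (ε⁻¹ * ‖C v - (u : 𝓗)‖) := by
          rw [← hCRu, ← hsplit]
          exact le_trans (norm_sub_le _ _) (add_le_add hb1 hb2)
        -- multiply both sides by ε
        have hεinv : ε * ε⁻¹ = 1 := mul_inv_cancel₀ (ne_of_gt hεpos)
        have hmul : ‖C (u : 𝓗)‖ ≤ ε * (K * ‖v‖) + ‖C‖ * ‖C v - (u : 𝓗)‖ := by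
          calc ‖C (u : 𝓗)‖ = ε * (ε⁻¹ * ‖C (u : 𝓗)‖) := by
                rw [← mul_assoc, hεinv, one_mul]
            _ ≤ ε * (K * ‖v‖ + ‖C‖ * (ε⁻¹ * ‖C v - (u : 𝓗)‖)) :=
                mul_le_mul_of_nonneg_left hkey (le_of_lt hεpos)
            _ = ε * (K * ‖v‖) + ‖C‖ * (ε * ε⁻¹) * ‖C v - (u : 𝓗)‖ := by ring
            _ = ε * (K * ‖v‖) + ‖C‖ * ‖C v - (u : 𝓗)‖ := by rw [hεinv, mul_one]
        have e1 : ε * (K * ‖v‖) ≤ η / 2 := by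
          rw [hε, div_mul_eq_mul_div, div_le_div_iff₀ (by positivity) (by norm_num)]
          nlinarith [norm_nonneg v, mul_nonneg hK0 (norm_nonneg v)]
        have e2 : ‖C‖ * ‖C v - (u : 𝓗)‖ ≤ η / 2 := by
          have h1 : ‖C‖ * ‖C v - (u : 𝓗)‖ ≤ ‖C‖ * (η / (2 * (‖C‖ + 1))) :=
            mul_le_mul_of_nonneg_left (le_of_lt hv) (norm_nonneg C)
          refine h1.trans ?_
          rw [mul_div_assoc', div_le_div_iff₀ (by positivity) (by norm_num : (0:ℝ) < 2)]
          nlinarith [norm_nonneg C, hη.le]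
        linarith
      -- Step 2 : u ⟂ closure (range C) ∋ u
      have horth : ∀ x ∈ closure (Set.range (⇑C)), ⟪(u : 𝓗), x⟫_ℂ = 0 := by
        have hcl : IsClosed {x : 𝓗 | ⟪(u : 𝓗), x⟫_ℂ = 0} :=
          isClosed_eq (Continuous.inner continuous_const continuous_id) continuous_const
        intro x hx
        refine hcl.closure_subset_iff.mpr ?_ hx
        rintro _ ⟨w, rfl⟩
        show ⟪(u : 𝓗), C w⟫_ℂ = 0
        have hsymC : ⟪C (u : 𝓗), w⟫_ℂ = ⟪(u : 𝓗), C w⟫_ℂ := hC.isSymmetric (u : 𝓗) w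
        rw [← hsymC, hCu, inner_zero_left]
      have : ⟪(u : 𝓗), (u : 𝓗)⟫_ℂ = 0 := horth _ hucl
      exact inner_self_eq_zero.mp this
  refine ⟨main, ?_⟩
  intro _ hdr lam u hu
  exact main lam u hu (by rw [hdr.closure_range]; trivial)
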